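/- arXiv:2404.11550 — 3 statements merged into one kernel-verified Lean document; each statement's English description precedes it below -/
import Mathlib

section
/- Assume the Maass-type hypothesis for (A_m)_{m∈ℤ∖{0}}. Then each L_ε extends meromorphically to ℂ via L_ε(s) = Λ_ε(s)/γ(s+ε), and for every integer n ≥ 0 the continued values satisfy: if n is even then L₁(−n) = −(2^{−2n}/π^{2n+2})·(n!)²·L₁(n+1) and L₀(−n) = 0; if n is odd then L₀(−n) = (2^{−2n}/π^{2n+2})·(n!)²·L₀(n+1) and L₁(−n) = 0. -/
noncomputable section

open Complex Filter Topology

/-- The gamma factor `γ(s) = Γ(s/2)² / (4 π^s)`. -/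
def gammaFactor (s : ℂ) : ℂ := Complex.Gamma (s / 2) ^ 2 / (4 * (Real.pi : ℂ) ^ s)

/-- The coefficients `A_m + (-1)^ε A_{-m}` of the L-series `L_ε`. -/
def maassCoef (A : ℤ → ℂ) (ε : ℕ) (m : ℕ) : ℂ :=
  A ((m : ℤ) + 1) + (-1) ^ ε * A (-((m : ℤ) + 1))

lemma hπ : (Real.pi : ℂ) ≠ 0 := Complex.ofReal_ne_zero.mpr Real.pi_ne_zero

lemma hsqrtsq : ((Real.pi : ℂ) ^ (1/2 : ℂ)) ^ 2 = (Real.pi : ℂ) := by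
  rw [sq, ← Complex.cpow_add _ _ hπ]
  norm_num

lemma gamma_half_sub : ∀ k : ℕ, Complex.Gamma (1/2 - (k:ℂ)) * ((2*k).factorial : ℂ)
    = (-1)^k * 2^(2*k) * (k.factorial : ℂ) * ((Real.pi : ℂ) ^ (1/2 : ℂ))
  | 0 => by simpa using Complex.Gamma_one_half_eq
  | (k+1) => by
      have ih := gamma_half_sub k
      have hs : (1/2 - ((k:ℂ)+1)) ≠ 0 := by
        intro h
        have := congrArg Complex.re h
        push_cast at this
        simp at this
        nlinarith [Nat.cast_nonneg (α := ℝ) k, this]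
      have hG : Complex.Gamma (1/2 - (k:ℂ)) = (1/2 - ((k:ℂ)+1)) * Complex.Gamma (1/2 - ((k:ℂ)+1)) := by
        rw [← Complex.Gamma_add_one _ hs]
        congr 1; ring
      have f1 : ((2*(k+1)).factorial : ℂ) = (2*(k:ℂ)+2) * (2*(k:ℂ)+1) * ((2*k).factorial : ℂ) := by
        rw [show 2*(k+1) = (2*k+1)+1 by ring, Nat.factorial_succ, Nat.factorial_succ]
        push_cast; ring
      have f2 : (((k+1)).factorial : ℂ) = ((k:ℂ)+1) * (k.factorial : ℂ) := by
        rw [Nat.factorial_succ]; push_cast; ring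
      have cast1 : ((k+1:ℕ):ℂ) = (k:ℂ)+1 := by push_cast; ring
      rw [cast1, f1, f2]
      apply mul_left_cancel₀ hs
      rw [hG] at ih
      calc (1/2 - ((k:ℂ)+1)) * (Complex.Gamma (1/2 - ((k:ℂ)+1)) * ((2*(k:ℂ)+2) * (2*(k:ℂ)+1) * ((2*k).factorial : ℂ)))
          = ((1/2 - ((k:ℂ)+1)) * Complex.Gamma (1/2 - ((k:ℂ)+1)) * ((2*k).factorial : ℂ)) * ((2*(k:ℂ)+2) * (2*(k:ℂ)+1)) := by ring
        _ = ((-1)^k * 2^(2*k) * (k.factorial : ℂ) * ((Real.pi : ℂ) ^ (1/2 : ℂ))) * ((2*(k:ℂ)+2) * (2*(k:ℂ)+1)) := by rw [ih]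
        _ = (1/2 - ((k:ℂ)+1)) * ((-1)^(k+1) * 2^(2*(k+1)) * (((k:ℂ)+1) * (k.factorial:ℂ)) * ((Real.pi : ℂ) ^ (1/2 : ℂ))) := by ring

lemma gamma_half_sub_sq (k : ℕ) : Complex.Gamma (1/2 - (k:ℂ))^2 * ((2*k).factorial : ℂ)^2
    = 2^(4*k) * (k.factorial : ℂ)^2 * (Real.pi : ℂ) := by
  have h : (Complex.Gamma (1/2 - (k:ℂ)) * ((2*k).factorial : ℂ))^2
      = ((-1)^k * 2^(2*k) * (k.factorial : ℂ) * ((Real.pi : ℂ) ^ (1/2 : ℂ)))^2 := by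
    rw [gamma_half_sub k]
  have hneg : ((-1:ℂ)^k)^2 = 1 := by
    rw [← pow_mul, mul_comm, pow_mul, neg_one_sq, one_pow]
  have hp : ((2:ℂ)^(2*k))^2 = 2^(4*k) := by rw [← pow_mul]; ring_nf
  calc Complex.Gamma (1/2 - (k:ℂ))^2 * ((2*k).factorial : ℂ)^2
      = (Complex.Gamma (1/2 - (k:ℂ)) * ((2*k).factorial : ℂ))^2 := by ring
    _ = ((-1:ℂ)^k)^2 * ((2:ℂ)^(2*k))^2 * (k.factorial : ℂ)^2 * ((Real.pi : ℂ) ^ (1/2 : ℂ))^2 := by rw [h]; ring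
    _ = 2^(4*k) * (k.factorial : ℂ)^2 * (Real.pi : ℂ) := by rw [hneg, hp, hsqrtsq]; ring

lemma gamma_half_sub_ne (k : ℕ) : Complex.Gamma (1/2 - (k:ℂ)) ≠ 0 := by
  have hne : (2:ℂ)^(4*k) * (k.factorial:ℂ)^2 * (Real.pi:ℂ) ≠ 0 :=
    mul_ne_zero (mul_ne_zero (pow_ne_zero _ two_ne_zero)
      (pow_ne_zero _ (Nat.cast_ne_zero.mpr k.factorial_ne_zero))) hπ
  intro h
  apply hne
  rw [← gamma_half_sub_sq k, h]
  ring

lemma cpow_pi_ne (s : ℂ) : (Real.pi : ℂ) ^ s ≠ 0 := by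
  simp [Complex.cpow_eq_zero_iff, Real.pi_ne_zero]

lemma gammaFactor_ne_zero {s : ℂ} (h : Complex.Gamma (s/2) ≠ 0) : gammaFactor s ≠ 0 :=
  div_ne_zero (pow_ne_zero _ h) (mul_ne_zero (by norm_num) (cpow_pi_ne s))

lemma cpow_pi_natCast (n : ℕ) : (Real.pi : ℂ) ^ ((n:ℂ)) = (Real.pi : ℂ) ^ n := by
  rw [Complex.cpow_natCast]

lemma cpow_pi_int (n : ℕ) (s : ℂ) (h : s = ((-(n:ℤ) : ℤ) : ℂ)) :
    (Real.pi : ℂ) ^ s = ((Real.pi : ℂ) ^ n)⁻¹ := by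
  rw [h, Complex.cpow_intCast, zpow_neg, zpow_natCast]

/-- γ(n+2) for even n = k+k. -/
lemma gfe (n k : ℕ) (hk : n = k + k) :
    gammaFactor ((n:ℂ)+1+1) = ((2:ℂ)^(2*n))⁻¹ / (Real.pi:ℂ)^(2*n+2) * (n.factorial : ℂ)^2
      * gammaFactor (-(n:ℂ)+1) := by
  subst hk
  have hf : ((k+k).factorial : ℂ) = ((2*k).factorial : ℂ) := by norm_num [two_mul]
  have e1 : (((k+k:ℕ):ℂ)+1+1)/2 = (k:ℂ)+1 := by push_cast; ring
  have e2 : (-((k+k:ℕ):ℂ)+1)/2 = 1/2 - (k:ℂ) := by push_cast; ring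
  have p1 : (Real.pi:ℂ) ^ (((k+k:ℕ):ℂ)+1+1) = (Real.pi:ℂ) ^ (2*k+2 : ℕ) := by
    rw [show (((k+k:ℕ):ℂ)+1+1) = ((2*k+2 : ℕ) : ℂ) by push_cast; ring, cpow_pi_natCast]
  have p2 : (Real.pi:ℂ) ^ (-((k+k:ℕ):ℂ)+1) = (Real.pi:ℂ) * ((Real.pi:ℂ)^(2*k:ℕ))⁻¹ := by
    rw [show (-((k+k:ℕ):ℂ)+1) = ((1:ℂ) + (-((2*k:ℕ):ℤ) : ℤ)) by push_cast; ring,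
      Complex.cpow_add _ _ hπ, Complex.cpow_one, Complex.cpow_intCast, zpow_neg, zpow_natCast]
  have hG : Complex.Gamma ((k:ℂ)+1) = (k.factorial : ℂ) := Complex.Gamma_nat_eq_factorial k
  have hsq := gamma_half_sub_sq k
  have hπn : (Real.pi:ℂ)^(2*k:ℕ) ≠ 0 := pow_ne_zero _ hπ
  have h2k : ((2*k).factorial : ℂ) ≠ 0 := Nat.cast_ne_zero.mpr (Nat.factorial_ne_zero _)
  unfold gammaFactor
  rw [e1, e2, p1, p2, hG, hf]
  have hΓ : Complex.Gamma (1/2 - (k:ℂ))^2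
      = 2^(4*k) * (k.factorial : ℂ)^2 * (Real.pi : ℂ) / ((2*k).factorial : ℂ)^2 :=
    (eq_div_iff (pow_ne_zero _ h2k)).mpr hsq
  rw [hΓ]
  have h2 : (2:ℂ) ≠ 0 := two_ne_zero
  field_simp [hπ, h2k, h2]
  ring

/-- γ(n+1) for odd n = 2k+1. -/
lemma gfo (n k : ℕ) (hk : n = 2*k + 1) :
    gammaFactor ((n:ℂ)+1) = ((2:ℂ)^(2*n))⁻¹ / (Real.pi:ℂ)^(2*n+2) * (n.factorial : ℂ)^2
      * gammaFactor (-(n:ℂ)) := by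
  subst hk
  have e1 : (((2*k+1:ℕ):ℂ)+1)/2 = (k:ℂ)+1 := by push_cast; ring
  have e2 : (-((2*k+1:ℕ):ℂ))/2 = 1/2 - (((k+1:ℕ)):ℂ) := by push_cast; ring
  have p1 : (Real.pi:ℂ) ^ (((2*k+1:ℕ):ℂ)+1) = (Real.pi:ℂ) ^ (2*k+2 : ℕ) := by
    rw [show (((2*k+1:ℕ):ℂ)+1) = ((2*k+2 : ℕ) : ℂ) by push_cast; ring, cpow_pi_natCast]
  have p2 : (Real.pi:ℂ) ^ (-((2*k+1:ℕ):ℂ)) = ((Real.pi:ℂ)^(2*k+1:ℕ))⁻¹ := by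
    apply cpow_pi_int; push_cast; ring
  have hG : Complex.Gamma ((k:ℂ)+1) = (k.factorial : ℂ) := Complex.Gamma_nat_eq_factorial k
  have hsq := gamma_half_sub_sq (k+1)
  have f1 : ((2*(k+1)).factorial : ℂ) = (2*(k:ℂ)+2) * ((2*k+1).factorial : ℂ) := by
    rw [show 2*(k+1) = (2*k+1)+1 by ring, Nat.factorial_succ]; push_cast; ring
  have f2 : (((k+1)).factorial : ℂ) = ((k:ℂ)+1) * (k.factorial : ℂ) := by
    rw [Nat.factorial_succ]; push_cast; ring
  have h2k1 : ((2*k+1).factorial : ℂ) ≠ 0 := Nat.cast_ne_zero.mpr (Nat.factorial_ne_zero _)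
  have hk2 : (2*(k:ℂ)+2) ≠ 0 := by
    rw [show (2*(k:ℂ)+2) = ((2*k+2:ℕ):ℂ) by push_cast; ring]
    exact Nat.cast_ne_zero.mpr (by omega)
  have hΓ : Complex.Gamma (1/2 - (((k+1:ℕ)):ℂ))^2
      = 2^(4*(k+1)) * (((k+1)).factorial : ℂ)^2 * (Real.pi : ℂ) / ((2*(k+1)).factorial : ℂ)^2 :=
    (eq_div_iff (pow_ne_zero _ (Nat.cast_ne_zero.mpr (Nat.factorial_ne_zero _)))).mpr hsq
  rw [f1, f2] at hΓ
  unfold gammaFactor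
  rw [e1, e2, p1, p2, hG, hΓ]
  have h2 : (2:ℂ) ≠ 0 := two_ne_zero
  field_simp [hπ, h2k1, hk2, h2]
  ring

lemma gz_even (n k : ℕ) (hk : n = k + k) : gammaFactor (-(n:ℂ)) = 0 := by
  subst hk
  unfold gammaFactor
  rw [show (-((k+k:ℕ):ℂ))/2 = -(k:ℂ) by push_cast; ring, Complex.Gamma_neg_nat_eq_zero]
  simp

lemma gz_odd (n k : ℕ) (hk : n = 2*k + 1) : gammaFactor (-(n:ℂ)+1) = 0 := by
  subst hk
  unfold gammaFactor
  rw [show (-((2*k+1:ℕ):ℂ)+1)/2 = -(k:ℂ) by push_cast; ring, Complex.Gamma_neg_nat_eq_zero]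
  simp

lemma gne_even (n k : ℕ) (hk : n = k + k) : gammaFactor (-(n:ℂ)+1) ≠ 0 := by
  subst hk
  apply gammaFactor_ne_zero
  rw [show (-((k+k:ℕ):ℂ)+1)/2 = 1/2 - (k:ℂ) by push_cast; ring]
  exact gamma_half_sub_ne k

lemma gne_odd (n k : ℕ) (hk : n = 2*k + 1) : gammaFactor (-(n:ℂ)) ≠ 0 := by
  subst hk
  apply gammaFactor_ne_zero
  rw [show (-((2*k+1:ℕ):ℂ))/2 = 1/2 - (((k+1:ℕ)):ℂ) by push_cast; ring]
  exact gamma_half_sub_ne (k+1)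

lemma gne_pos {s : ℂ} (h : 0 < s.re) : gammaFactor s ≠ 0 := by
  apply gammaFactor_ne_zero
  apply Complex.Gamma_ne_zero_of_re_pos
  rw [Complex.div_re]
  simp [Complex.normSq]
  positivity


/-- Under the Maass-type hypothesis, each `L_ε` extends meromorphically
to ℂ via `L_ε(s) = Λ_ε(s)/γ(s+ε)`, and the continued values at negative integers are
determined by the functional equation: for even `n`,
`L₁(-n) = -(2^{-2n}/π^{2n+2})(n!)² L₁(n+1)` and `L₀(-n) = 0`; for odd `n`,
`L₀(-n) = (2^{-2n}/π^{2n+2})(n!)² L₀(n+1)` and `L₁(-n) = 0`. -/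
theorem stmt6 (A : ℤ → ℂ) (α : ℝ) (hα : 0 ≤ α)
    (Λ : ℕ → ℂ → ℂ)
    -- absolute convergence of L_ε for Re(s) > α
    (hsum : ∀ ε ∈ ({0, 1} : Set ℕ), ∀ s : ℂ, α < s.re →
      Summable fun m : ℕ => ‖maassCoef A ε m / ((m : ℂ) + 1) ^ s‖)
    -- Λ_ε is entire ...
    (hent : ∀ ε ∈ ({0, 1} : Set ℕ), Differentiable ℂ (Λ ε))
    -- ... of finite order ...
    (hord : ∀ ε ∈ ({0, 1} : Set ℕ), ∃ c ρ : ℝ, 0 < c ∧ 0 < ρ ∧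
      ∀ s : ℂ, ‖Λ ε s‖ ≤ c * Real.exp (‖s‖ ^ ρ))
    -- ... agrees with γ(s+ε)·L_ε(s) on the half-plane of convergence ...
    (hagree : ∀ ε ∈ ({0, 1} : Set ℕ), ∀ s : ℂ, α < s.re →
      Λ ε s = gammaFactor (s + (ε : ℂ)) * ∑' m : ℕ, maassCoef A ε m / ((m : ℂ) + 1) ^ s)
    -- ... and satisfies the functional equation Λ_ε(1-s) = (-1)^ε Λ_ε(s)
    (hfe : ∀ ε ∈ ({0, 1} : Set ℕ), ∀ s : ℂ, Λ ε (1 - s) = (-1) ^ ε * Λ ε s) :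
    -- L_ε extends meromorphically to ℂ via Λ_ε(s)/γ(s+ε)
    (∀ ε ∈ ({0, 1} : Set ℕ),
      MeromorphicOn (fun s : ℂ => Λ ε s / gammaFactor (s + (ε : ℂ))) Set.univ ∧
      ∀ s : ℂ, α < s.re →
        Λ ε s / gammaFactor (s + (ε : ℂ))
          = ∑' m : ℕ, maassCoef A ε m / ((m : ℂ) + 1) ^ s) ∧
    -- values of the continuation at -n, n even
    (∀ n : ℕ, Even n →
      Λ 1 (-(n : ℂ)) / gammaFactor (-(n : ℂ) + 1)
          = -(((2 : ℂ) ^ (2 * n))⁻¹ / (Real.pi : ℂ) ^ (2 * n + 2)) * (n.factorial : ℂ) ^ 2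
              * (Λ 1 ((n : ℂ) + 1) / gammaFactor ((n : ℂ) + 1 + 1)) ∧
      Λ 0 (-(n : ℂ)) / gammaFactor (-(n : ℂ)) = 0) ∧
    -- values of the continuation at -n, n odd
    (∀ n : ℕ, Odd n →
      Λ 0 (-(n : ℂ)) / gammaFactor (-(n : ℂ))
          = (((2 : ℂ) ^ (2 * n))⁻¹ / (Real.pi : ℂ) ^ (2 * n + 2)) * (n.factorial : ℂ) ^ 2
              * (Λ 0 ((n : ℂ) + 1) / gammaFactor ((n : ℂ) + 1)) ∧
      Λ 1 (-(n : ℂ)) / gammaFactor (-(n : ℂ) + 1) = 0) := by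
  refine ⟨fun ε hε => ⟨?_, fun s hs => ?_⟩, fun n hn => ⟨?_, ?_⟩, fun n hn => ⟨?_, ?_⟩⟩
  · -- meromorphy
    have key : (fun s : ℂ => Λ ε s / gammaFactor (s + (ε : ℂ)))
        = fun s : ℂ => Λ ε s * (4 * (Real.pi : ℂ) ^ (s + (ε:ℂ)))
            * ((Complex.Gamma ((s + (ε:ℂ))/2))⁻¹)^2 := by
      funext s
      simp only [gammaFactor, div_eq_mul_inv, mul_inv, inv_inv, inv_pow]
      ring
    rw [key]
    have hdiff : Differentiable ℂ (fun s : ℂ => Λ ε s * (4 * (Real.pi : ℂ) ^ (s + (ε:ℂ)))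
        * ((Complex.Gamma ((s + (ε:ℂ))/2))⁻¹)^2) := by
      refine (((hent ε hε).mul ((differentiable_const _).mul
        (Differentiable.const_cpow (differentiable_id.add_const _) (Or.inl hπ)))).mul ?_)
      exact (Complex.differentiable_one_div_Gamma.comp
        ((differentiable_id.add_const _).div_const 2)).pow 2
    intro x _
    exact (hdiff.analyticAt x).meromorphicAt
  · -- agreement
    have hne : gammaFactor (s + (ε:ℂ)) ≠ 0 := by
      apply gne_pos
      simp only [Complex.add_re, Complex.natCast_re]
      have : (0:ℝ) ≤ ε := Nat.cast_nonneg ε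
      linarith
    rw [hagree ε hε s hs, mul_div_cancel_left₀ _ hne]
  · -- even, ε = 1
    obtain ⟨k, hk⟩ := hn
    have hfe1 := hfe 1 (by simp) ((n:ℂ)+1)
    rw [show (1:ℂ) - ((n:ℂ)+1) = -(n:ℂ) by ring] at hfe1
    rw [hfe1, gfe n k hk]
    have h1 := gne_even n k hk
    have h2 : ((2:ℂ)^(2*n)) ≠ 0 := pow_ne_zero _ two_ne_zero
    have h3 : ((Real.pi:ℂ)^(2*n+2)) ≠ 0 := pow_ne_zero _ hπ
    have h4 : ((n.factorial:ℂ)) ≠ 0 := Nat.cast_ne_zero.mpr (Nat.factorial_ne_zero _)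
    field_simp
  · obtain ⟨k, hk⟩ := hn
    rw [gz_even n k hk, div_zero]
  · -- odd, ε = 0
    obtain ⟨k, hk⟩ := hn
    have hfe0 := hfe 0 (by simp) ((n:ℂ)+1)
    rw [show (1:ℂ) - ((n:ℂ)+1) = -(n:ℂ) by ring] at hfe0
    rw [hfe0, gfo n k hk]
    have h1 := gne_odd n k hk
    have h2 : ((2:ℂ)^(2*n)) ≠ 0 := pow_ne_zero _ two_ne_zero
    have h3 : ((Real.pi:ℂ)^(2*n+2)) ≠ 0 := pow_ne_zero _ hπ
    have h4 : ((n.factorial:ℂ)) ≠ 0 := Nat.cast_ne_zero.mpr (Nat.factorial_ne_zero _)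
    field_simp
  · obtain ⟨k, hk⟩ := hn
    rw [gz_odd n k hk, div_zero]
end
end

section
/- Let g be a cusp form of even weight ω for SL₂(ℤ) with Fourier expansion g(y) = Σ_{m≥1} A_m e^{2πimy}, and let L_g(s) = Σ_{m≥1} A_m m^{−s} (absolutely convergent for Re(s) large), which by Hecke's theorem extends to an entire function. Define c_n := −(Γ(n)/(2πi))·(2πi)^{−n}·L_g(n) for n ≥ 1 (equal to −(Γ(n)/(2πi))·Σ_{m≥1} A_m (2πim)^{−n} when the series converges absolutely). Then the formal power series f̃(y) = Σ_{n≥1} c_n yⁿ is Gevrey-1, its Borel transform B[f̃](ζ) converges for |ζ| < 2π, and B[f̃] extends to a meromorphic function on ℂ whose only singularities are simple poles at ζ_m = 2πim for m ∈ ℤ_{>0}, with residue A_m/(2πi) at ζ_m (Stokes constant −A_m). -/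
/-!
With `ζ_m = 2πi(m+1)`, for `n > ω + 1` the Dirichlet series gives
`c_n / (n-1)! = -(2πi)⁻¹ Σ_m A_{m+1} ζ_m^{-n}`. Summing the geometric series in `ζ` termwise
(the double series converges absolutely for `|ζ| < 2π` by the Hecke bound), the Borel transform
is, up to a polynomial of degree `≤ ω + 1`, the Mittag-Leffler series
`(2πi)⁻¹ Σ_m A_{m+1} ζ^{ω+2} / (ζ_m^{ω+2} (ζ - ζ_m))`. The Hecke bound makes this series converge
locally uniformly away from the poles, which gives the meromorphic continuation and the residues
`A_{m+1} / (2πi)`. Gevrey-1 growth of `c_n` follows from the positive radius of convergence of the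
Borel transform.
-/

noncomputable section

open Complex Filter Topology

def poleTerm (a p : ℕ → ℂ) (N m : ℕ) (z : ℂ) : ℂ := a m * (z ^ N / (p m ^ N * (z - p m)))

def poleSeries (a p : ℕ → ℂ) (N : ℕ) (z : ℂ) : ℂ := ∑' m, poleTerm a p N m z

section PoleSeries

variable {a p : ℕ → ℂ} {N : ℕ}

lemma norm_poleTerm_le {R δ : ℝ} (hδ : 0 < δ) {z : ℂ} (hz : ‖z‖ ≤ R) {m : ℕ}
    (hm : R + δ ≤ ‖p m‖) : ‖poleTerm a p N m z‖ ≤ ‖a m‖ / ‖p m‖ ^ N * (R ^ N / δ) := by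
  have hR : 0 ≤ R := (norm_nonneg z).trans hz
  have hp : 0 < ‖p m‖ := by linarith
  have hdist : δ ≤ ‖z - p m‖ := by
    linarith [norm_sub_norm_le (p m) z, norm_sub_rev (p m) z]
  calc ‖poleTerm a p N m z‖ = ‖a m‖ * (‖z‖ ^ N / (‖p m‖ ^ N * ‖z - p m‖)) := by
        simp only [poleTerm, norm_mul, norm_div, norm_pow]
    _ ≤ ‖a m‖ * (R ^ N / (‖p m‖ ^ N * δ)) := by gcongr
    _ = ‖a m‖ / ‖p m‖ ^ N * (R ^ N / δ) := by field_simp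

-- At a pole the term is `0` (division by zero), so the series converges everywhere.
lemma summable_poleTerm (hp : Tendsto (fun m => ‖p m‖) atTop atTop)
    (ha : Summable fun m => ‖a m‖ / ‖p m‖ ^ N) (z : ℂ) : Summable fun m => poleTerm a p N m z :=
  .of_norm_bounded_eventually_nat (ha.mul_right (‖z‖ ^ N / 1))
    ((hp.eventually_ge_atTop (‖z‖ + 1)).mono fun _ hm => norm_poleTerm_le one_pos le_rfl hm)

lemma differentiableAt_poleTerm {m : ℕ} (hp : p m ≠ 0) {z : ℂ} (hz : a m ≠ 0 → z ≠ p m) :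
    DifferentiableAt ℂ (poleTerm a p N m) z := by
  by_cases ha : a m = 0
  · have h0 : poleTerm a p N m = fun _ => 0 := funext fun z => by simp [poleTerm, ha]
    exact h0 ▸ differentiableAt_const 0
  · refine (differentiableAt_const _).mul ((differentiableAt_pow N).div
      ((differentiableAt_const _).mul (differentiableAt_id.sub_const _)) ?_)
    exact mul_ne_zero (pow_ne_zero _ hp) (sub_ne_zero.2 (hz ha))

lemma differentiableAt_poleSeries (hp : Tendsto (fun m => ‖p m‖) atTop atTop)
    (ha : Summable fun m => ‖a m‖ / ‖p m‖ ^ N) (hp0 : ∀ m, p m ≠ 0) {z₀ : ℂ}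
    (hz₀ : ∀ m, a m ≠ 0 → z₀ ≠ p m) : DifferentiableAt ℂ (poleSeries a p N) z₀ := by
  obtain ⟨M, hM⟩ := eventually_atTop.1 (hp.eventually_ge_atTop (‖z₀‖ + 2))
  have hsplit : poleSeries a p N =
      fun z => ∑ m ∈ Finset.range M, poleTerm a p N m z + ∑' m, poleTerm a p N (m + M) z :=
    funext fun z => ((summable_poleTerm hp ha z).sum_add_tsum_nat_add M).symm
  -- on `ball z₀ 1` the poles `p m`, `m ≥ M`, stay at distance at least `1`
  have htail : DifferentiableOn ℂ (fun z => ∑' m, poleTerm a p N (m + M) z)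
      (Metric.ball z₀ 1) := by
    refine Complex.differentiableOn_tsum_of_summable_norm
      (((summable_nat_add_iff M).2 ha).mul_right ((‖z₀‖ + 1) ^ N / 1)) (fun m w hw => ?_)
      Metric.isOpen_ball (fun m w hw => ?_)
    all_goals
      have hw : ‖w‖ ≤ ‖z₀‖ + 1 := by
        linarith [norm_le_norm_add_norm_sub' w z₀, mem_ball_iff_norm.1 hw]
      have hm := hM (m + M) (by omega)
    · refine (differentiableAt_poleTerm (hp0 _) fun _ h => ?_).differentiableWithinAt
      rw [h] at hw
      linarith
    · exact norm_poleTerm_le one_pos hw (by linarith)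
  rw [hsplit]
  exact (DifferentiableAt.fun_sum fun m _ => differentiableAt_poleTerm (hp0 m) (hz₀ m)).add
    (htail.differentiableAt (Metric.ball_mem_nhds z₀ one_pos))

lemma poleSeries_eq_poleTerm_add (hp : Tendsto (fun m => ‖p m‖) atTop atTop)
    (ha : Summable fun m => ‖a m‖ / ‖p m‖ ^ N) (m₀ : ℕ) (z : ℂ) :
    poleSeries a p N z = poleTerm a p N m₀ z + poleSeries (Function.update a m₀ 0) p N z := by
  rw [poleSeries, (summable_poleTerm hp ha z).tsum_eq_add_tsum_ite m₀, poleSeries]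
  congr 1
  refine tsum_congr fun m => ?_
  by_cases h : m = m₀ <;> simp [poleTerm, h]

lemma tendsto_sub_mul_poleSeries (hp : Tendsto (fun m => ‖p m‖) atTop atTop)
    (ha : Summable fun m => ‖a m‖ / ‖p m‖ ^ N) (hp0 : ∀ m, p m ≠ 0) {m₀ : ℕ}
    (hinj : ∀ m, m ≠ m₀ → p m ≠ p m₀) :
    Tendsto (fun z => (z - p m₀) * poleSeries a p N z) (𝓝[≠] p m₀) (𝓝 (a m₀)) := by
  set a' := Function.update a m₀ 0
  have ha' : Summable fun m => ‖a' m‖ / ‖p m‖ ^ N := by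
    refine ha.of_nonneg_of_le (fun _ => by positivity) fun m => ?_
    rcases eq_or_ne m m₀ with rfl | h
    · simp only [a', Function.update_self, norm_zero, zero_div]
      positivity
    · simp [a', h]
  have hsplit : ∀ z, poleSeries a p N z = poleTerm a p N m₀ z + poleSeries a' p N z :=
    poleSeries_eq_poleTerm_add hp ha m₀
  have hd : DifferentiableAt ℂ (poleSeries a' p N) (p m₀) := by
    refine differentiableAt_poleSeries hp ha' hp0 fun m hm => (hinj m fun h => hm ?_).symm
    simp [a', h]
  have hlim : Tendsto (fun z => a m₀ * (z ^ N / p m₀ ^ N) + (z - p m₀) * poleSeries a' p N z)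
      (𝓝 (p m₀)) (𝓝 (a m₀)) := by
    have hc : ContinuousAt
        (fun z => a m₀ * (z ^ N / p m₀ ^ N) + (z - p m₀) * poleSeries a' p N z) (p m₀) := by
      have := hd.continuousAt
      fun_prop
    simpa [hp0] using hc.tendsto
  refine (hlim.mono_left nhdsWithin_le_nhds).congr' ?_
  filter_upwards [self_mem_nhdsWithin] with z hz
  rw [hsplit z, poleTerm, mul_add]
  have hz' : z - p m₀ ≠ 0 := sub_ne_zero.2 hz
  field_simp

lemma hasSum_geometric_poleTerm {m : ℕ} {z : ℂ} (hz : ‖z‖ < ‖p m‖) :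
    HasSum (fun k => a m / p m ^ (k + N + 1) * z ^ (k + N)) (-poleTerm a p N m z) := by
  have hp : p m ≠ 0 := norm_pos_iff.1 ((norm_nonneg z).trans_lt hz)
  have hzp : z - p m ≠ 0 := fun h => by rw [sub_eq_zero.1 h] at hz; exact lt_irrefl _ hz
  have hq : ‖z / p m‖ < 1 := by rwa [norm_div, div_lt_one ((norm_nonneg z).trans_lt hz)]
  have h1 : 1 - z / p m = (p m - z) / p m := by field_simp
  have h2 : p m - z ≠ 0 := fun h => hzp (by linear_combination -h)
  have hsum : -poleTerm a p N m z = a m * z ^ N / p m ^ (N + 1) * (1 - z / p m)⁻¹ := by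
    rw [poleTerm, h1]
    field_simp
    ring
  have hterm : (fun k => a m / p m ^ (k + N + 1) * z ^ (k + N)) =
      fun k => a m * z ^ N / p m ^ (N + 1) * (z / p m) ^ k := by
    funext k
    rw [div_pow]
    field_simp
    ring
  rw [hsum, hterm]
  exact (hasSum_geometric_of_norm_lt_one hq).mul_left _

lemma norm_taylorTerm_poleTerm_le {r : ℝ} {m k : ℕ} (hr : r ≤ ‖p m‖) {z : ℂ} (hz : ‖z‖ < r) :
    ‖a m / p m ^ (k + N + 1) * z ^ (k + N)‖ ≤
      (‖z‖ / r) ^ k * (‖a m‖ / ‖p m‖ ^ N * (‖z‖ ^ N / r)) := by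
  have hr0 : 0 < r := (norm_nonneg z).trans_lt hz
  have hp : 0 < ‖p m‖ := hr0.trans_le hr
  calc ‖a m / p m ^ (k + N + 1) * z ^ (k + N)‖
      = (‖z‖ / ‖p m‖) ^ k * (‖a m‖ / ‖p m‖ ^ N * (‖z‖ ^ N / ‖p m‖)) := by
        rw [norm_mul, norm_div, norm_pow, norm_pow, div_pow]
        field_simp
        ring
    _ ≤ (‖z‖ / r) ^ k * (‖a m‖ / ‖p m‖ ^ N * (‖z‖ ^ N / r)) := by gcongr

-- Expand every term in a geometric series around `0` and interchange the two sums.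
lemma hasSum_poleSeries_taylor {r : ℝ} (hr : ∀ m, r ≤ ‖p m‖)
    (ha : Summable fun m => ‖a m‖ / ‖p m‖ ^ N) {z : ℂ} (hz : ‖z‖ < r) :
    HasSum (fun k => (∑' m, a m / p m ^ (k + N + 1)) * z ^ (k + N)) (-poleSeries a p N z) := by
  set F : ℕ × ℕ → ℂ := fun q => a q.2 / p q.2 ^ (q.1 + N + 1) * z ^ (q.1 + N)
  have hr0 : 0 < r := (norm_nonneg z).trans_lt hz
  have hF : Summable F := by
    refine .of_norm_bounded ?_ fun q => norm_taylorTerm_poleTerm_le (hr q.2) hz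
    refine (summable_geometric_of_lt_one (by positivity) ((div_lt_one hr0).2 hz)).mul_of_nonneg
      (ha.mul_right _) (fun _ => by positivity) (fun _ => by positivity)
  have hfiber_k := hF.hasSum.prod_fiberwise fun k => (hF.prod_factor k).hasSum
  have hfiber_m := ((Equiv.prodComm ℕ ℕ).hasSum_iff.2 hF.hasSum).prod_fiberwise
    fun m => hasSum_geometric_poleTerm (N := N) (hz.trans_le (hr m))
  simp only [F, tsum_mul_right] at hfiber_k
  rwa [poleSeries, ← tsum_neg, hfiber_m.tsum_eq]

end PoleSeries

lemma exists_gevrey_bound_of_summable_borel {c : ℕ → ℂ} {z : ℂ} (hz : z ≠ 0)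
    (h : Summable fun k : ℕ => c (k + 1) / (k.factorial : ℂ) * z ^ k) :
    ∃ Cst K : ℝ, 0 < Cst ∧ 0 < K ∧ ∀ n : ℕ, 1 ≤ n →
      ‖c n‖ ≤ Cst * K⁻¹ ^ n * (n.factorial : ℝ) := by
  obtain ⟨B, hB⟩ := h.tendsto_cofinite_zero.norm.bddAbove_range_of_cofinite
  have hz' : 0 < ‖z‖ := norm_pos_iff.2 hz
  refine ⟨(|B| + 1) * ‖z‖, ‖z‖, by positivity, hz', fun n hn => ?_⟩
  obtain ⟨k, rfl⟩ := Nat.exists_eq_add_of_le' hn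
  have hbound : ‖c (k + 1) / (k.factorial : ℂ) * z ^ k‖ ≤ |B| + 1 :=
    (hB ⟨k, rfl⟩).trans (by linarith [le_abs_self B])
  have hfac : (k.factorial : ℝ) ≤ ((k + 1).factorial : ℝ) := by
    exact_mod_cast Nat.factorial_le (Nat.le_succ k)
  calc ‖c (k + 1)‖ = ‖c (k + 1) / (k.factorial : ℂ) * z ^ k‖ * k.factorial * ‖z‖⁻¹ ^ k := by
        rw [norm_mul, norm_div, norm_pow, Complex.norm_natCast, inv_pow]
        field_simp
    _ ≤ (|B| + 1) * (k + 1).factorial * ‖z‖⁻¹ ^ k := by gcongr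
    _ = (|B| + 1) * ‖z‖ * ‖z‖⁻¹ ^ (k + 1) * ((k + 1).factorial : ℝ) := by
        rw [inv_pow, inv_pow, pow_succ]
        field_simp

open scoped Real

def borelPole (m : ℕ) : ℂ := 2 * π * I * ((m : ℂ) + 1)

lemma norm_borelPole (m : ℕ) : ‖borelPole m‖ = 2 * π * (m + 1) := by
  rw [borelPole, norm_mul, norm_mul, norm_mul, Complex.norm_ofNat, Complex.norm_real,
    Real.norm_of_nonneg Real.pi_pos.le, Complex.norm_I, mul_one, ← Nat.cast_succ,
    Complex.norm_natCast, Nat.cast_succ]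

lemma two_pi_le_norm_borelPole (m : ℕ) : 2 * π ≤ ‖borelPole m‖ := by
  rw [norm_borelPole]
  nlinarith [Real.pi_pos, (m.cast_nonneg : (0 : ℝ) ≤ m)]

lemma borelPole_ne_zero (m : ℕ) : borelPole m ≠ 0 :=
  norm_pos_iff.1 ((by positivity : (0 : ℝ) < 2 * π).trans_le (two_pi_le_norm_borelPole m))

lemma borelPole_injective : Function.Injective borelPole := by
  intro m n h
  have h2πi : (2 * π * I : ℂ) ≠ 0 := by simp [Real.pi_ne_zero]
  exact_mod_cast add_right_cancel (mul_left_cancel₀ h2πi h)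

lemma tendsto_norm_borelPole : Tendsto (fun m => ‖borelPole m‖) atTop atTop := by
  simp only [norm_borelPole]
  exact (tendsto_atTop_add_const_right _ 1 tendsto_natCast_atTop_atTop).const_mul_atTop
    (by positivity)

lemma summable_norm_div_norm_borelPole_pow {ω : ℕ} {A : ℕ → ℂ} {C : ℝ}
    (hA : ∀ m : ℕ, 1 ≤ m → ‖A m‖ ≤ C * (m : ℝ) ^ ω) :
    Summable fun m => ‖A (m + 1)‖ / ‖borelPole m‖ ^ (ω + 2) := by
  have hsq : Summable fun m : ℕ => 1 / ((m : ℝ) + 1) ^ 2 := by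
    simpa using (Real.summable_one_div_nat_add_rpow 1 2).2 one_lt_two
  refine (hsq.mul_left (C / (2 * π) ^ (ω + 2))).of_nonneg_of_le (fun _ => by positivity)
    fun m => ?_
  have hm := hA (m + 1) (by omega)
  push_cast at hm
  calc ‖A (m + 1)‖ / ‖borelPole m‖ ^ (ω + 2)
      ≤ C * ((m : ℝ) + 1) ^ ω / (2 * π * (m + 1)) ^ (ω + 2) := by
        rw [norm_borelPole]; gcongr
    _ = C / (2 * π) ^ (ω + 2) * (1 / ((m : ℝ) + 1) ^ 2) := by
        rw [mul_pow, pow_add _ ω 2]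
        field_simp
        ring

lemma coeff_eq_neg_mul_tsum {ω : ℕ} {A : ℕ → ℂ} {Lg : ℂ → ℂ} {c : ℕ → ℂ}
    (hLagree : ∀ s : ℂ, (ω : ℝ) + 1 < s.re → Lg s = ∑' m : ℕ, A (m + 1) / ((m : ℂ) + 1) ^ s)
    (hc : ∀ n : ℕ, 1 ≤ n → c n = -(((n - 1).factorial : ℂ) / (2 * π * I))
        * (2 * π * I : ℂ) ^ (-(n : ℤ)) * Lg (n : ℂ))
    {n : ℕ} (hn : (ω : ℝ) + 1 < (n : ℝ)) :
    c n = -(((n - 1).factorial : ℂ) / (2 * π * I))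
      * ∑' m : ℕ, A (m + 1) * (2 * π * I * ((m : ℂ) + 1)) ^ (-(n : ℤ)) := by
  have hn1 : 1 ≤ n := (Nat.one_le_cast (α := ℝ)).1 (by linarith [(ω.cast_nonneg : (0 : ℝ) ≤ ω)])
  rw [hc n hn1, hLagree n (by simpa using hn), mul_assoc, ← tsum_mul_left]
  congr 1
  refine tsum_congr fun m => ?_
  simp only [Complex.cpow_natCast, zpow_neg, zpow_natCast, mul_pow, mul_inv, div_eq_mul_inv]
  ring

def borelExtension (ω : ℕ) (A c : ℕ → ℂ) (z : ℂ) : ℂ :=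
  ∑ k ∈ Finset.range (ω + 2), c (k + 1) / (k.factorial : ℂ) * z ^ k
    + (2 * π * I)⁻¹ * poleSeries (fun m => A (m + 1)) borelPole (ω + 2) z

section BorelExtension

variable {ω : ℕ} {A c : ℕ → ℂ} {C : ℝ}

lemma coeff_div_factorial_eq
    (hc : ∀ n : ℕ, (ω : ℝ) + 1 < (n : ℝ) → c n = -(((n - 1).factorial : ℂ) / (2 * π * I))
        * ∑' m : ℕ, A (m + 1) * (2 * π * I * ((m : ℂ) + 1)) ^ (-(n : ℤ)))
    {n : ℕ} (hn : ω + 1 ≤ n) :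
    c (n + 1) / (n.factorial : ℂ) = -(2 * π * I)⁻¹ * ∑' m, A (m + 1) / borelPole m ^ (n + 1) := by
  rw [hc (n + 1) (by exact_mod_cast Nat.lt_succ_of_le hn), Nat.add_sub_cancel]
  simp only [borelPole, zpow_neg, zpow_natCast, div_eq_mul_inv]
  have hfac : (n.factorial : ℂ) ≠ 0 := Nat.cast_ne_zero.2 n.factorial_ne_zero
  field_simp

lemma hasSum_borelExtension (hA : ∀ m : ℕ, 1 ≤ m → ‖A m‖ ≤ C * (m : ℝ) ^ ω)
    (hc : ∀ n : ℕ, (ω : ℝ) + 1 < (n : ℝ) → c n = -(((n - 1).factorial : ℂ) / (2 * π * I))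
        * ∑' m : ℕ, A (m + 1) * (2 * π * I * ((m : ℂ) + 1)) ^ (-(n : ℤ)))
    {z : ℂ} (hz : ‖z‖ < 2 * π) :
    HasSum (fun k : ℕ => c (k + 1) / (k.factorial : ℂ) * z ^ k) (borelExtension ω A c z) := by
  refine (hasSum_nat_add_iff' (ω + 2)).1 ?_
  rw [borelExtension, add_sub_cancel_left]
  have htaylor := (hasSum_poleSeries_taylor two_pi_le_norm_borelPole
    (summable_norm_div_norm_borelPole_pow hA) hz).mul_left (-(2 * π * I)⁻¹)
  rw [neg_mul_neg] at htaylor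
  have hterm : (fun k => c (k + (ω + 2) + 1) / ((k + (ω + 2)).factorial : ℂ) * z ^ (k + (ω + 2)))
      = fun k => -(2 * π * I)⁻¹ *
        ((∑' m, A (m + 1) / borelPole m ^ (k + (ω + 2) + 1)) * z ^ (k + (ω + 2))) :=
    funext fun k => by rw [coeff_div_factorial_eq hc (by omega), mul_assoc]
  exact hterm ▸ htaylor

lemma differentiableAt_borelExtension (hA : ∀ m : ℕ, 1 ≤ m → ‖A m‖ ≤ C * (m : ℝ) ^ ω)
    {z : ℂ} (hz : ∀ m, z ≠ borelPole m) : DifferentiableAt ℂ (borelExtension ω A c) z := by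
  refine (DifferentiableAt.fun_sum fun k _ => by fun_prop).add ((differentiableAt_const _).mul ?_)
  exact differentiableAt_poleSeries tendsto_norm_borelPole
    (summable_norm_div_norm_borelPole_pow hA) borelPole_ne_zero fun m _ => hz m

lemma tendsto_sub_mul_borelExtension (hA : ∀ m : ℕ, 1 ≤ m → ‖A m‖ ≤ C * (m : ℝ) ^ ω)
    (m : ℕ) :
    Tendsto (fun z => (z - borelPole m) * borelExtension ω A c z) (𝓝[≠] borelPole m)
      (𝓝 (A (m + 1) / (2 * π * I))) := by
  have hpoly : Tendsto (fun z => (z - borelPole m) *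
      ∑ k ∈ Finset.range (ω + 2), c (k + 1) / (k.factorial : ℂ) * z ^ k) (𝓝[≠] borelPole m)
      (𝓝 0) := by
    have hc : Continuous fun z => (z - borelPole m) *
        ∑ k ∈ Finset.range (ω + 2), c (k + 1) / (k.factorial : ℂ) * z ^ k := by fun_prop
    simpa using (hc.tendsto (borelPole m)).mono_left nhdsWithin_le_nhds
  have hpole := tendsto_sub_mul_poleSeries (N := ω + 2) (m₀ := m) tendsto_norm_borelPole
    (summable_norm_div_norm_borelPole_pow hA) borelPole_ne_zero
    fun _ h => borelPole_injective.ne h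
  convert hpoly.add (hpole.const_mul (2 * π * I)⁻¹) using 1
  · funext z
    rw [borelExtension]
    ring
  · rw [zero_add, div_eq_inv_mul]

end BorelExtension

theorem stmt14_general (ω : ℕ)
    (A : ℕ → ℂ)
    -- Hecke bound on the Fourier coefficients
    (C : ℝ) (hA : ∀ m : ℕ, 1 ≤ m → ‖A m‖ ≤ C * (m : ℝ) ^ ω)
    -- the entire continuation of L_g (Hecke's theorem)
    (Lg : ℂ → ℂ)
    (hLagree : ∀ s : ℂ, (ω : ℝ) + 1 < s.re →
      Lg s = ∑' m : ℕ, A (m + 1) / ((m : ℂ) + 1) ^ s)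
    (c : ℕ → ℂ)
    (hc : ∀ n : ℕ, 1 ≤ n →
      c n = -(((n - 1).factorial : ℂ) / (2 * Real.pi * I))
        * (2 * Real.pi * I : ℂ) ^ (-(n : ℤ)) * Lg (n : ℂ)) :
    -- c n agrees with the absolutely convergent series when n > ω + 1
    (∀ n : ℕ, (ω : ℝ) + 1 < (n : ℝ) →
      c n = -(((n - 1).factorial : ℂ) / (2 * Real.pi * I))
        * ∑' m : ℕ, A (m + 1) * (2 * Real.pi * I * ((m : ℂ) + 1)) ^ (-(n : ℤ))) ∧
    -- f̃ is Gevrey-1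
    (∃ Cst K : ℝ, 0 < Cst ∧ 0 < K ∧ ∀ n : ℕ, 1 ≤ n →
      ‖c n‖ ≤ Cst * K⁻¹ ^ n * (n.factorial : ℝ)) ∧
    -- the Borel transform Σ_{n≥1} (c_n/Γ(n)) ζ^{n-1} converges on ‖ζ‖ < 2π ...
    (∀ z : ℂ, ‖z‖ < 2 * Real.pi →
      Summable fun k : ℕ => c (k + 1) / (k.factorial : ℂ) * z ^ k) ∧
    -- ... and extends to a meromorphic function whose only singularities are simple
    -- poles at 2πim with residue A_m/(2πi)
    (∃ G : ℂ → ℂ,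
      (∀ z : ℂ, ‖z‖ < 2 * Real.pi →
        G z = ∑' k : ℕ, c (k + 1) / (k.factorial : ℂ) * z ^ k) ∧
      (∀ z : ℂ, (∀ m : ℕ, z ≠ 2 * Real.pi * I * ((m : ℂ) + 1)) →
        DifferentiableAt ℂ G z) ∧
      (∀ m : ℕ, Tendsto
        (fun z : ℂ => (z - 2 * Real.pi * I * ((m : ℂ) + 1)) * G z)
        (𝓝[≠] (2 * Real.pi * I * ((m : ℂ) + 1)))
        (𝓝 (A (m + 1) / (2 * Real.pi * I))))) := by
  have hcoeff : ∀ n : ℕ, (ω : ℝ) + 1 < (n : ℝ) →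
      c n = -(((n - 1).factorial : ℂ) / (2 * Real.pi * I))
        * ∑' m : ℕ, A (m + 1) * (2 * Real.pi * I * ((m : ℂ) + 1)) ^ (-(n : ℤ)) :=
    fun _ hn => coeff_eq_neg_mul_tsum hLagree hc hn
  have hborel : ∀ z : ℂ, ‖z‖ < 2 * Real.pi →
      HasSum (fun k : ℕ => c (k + 1) / (k.factorial : ℂ) * z ^ k) (borelExtension ω A c z) :=
    fun _ hz => hasSum_borelExtension hA hcoeff hz
  have hone : ‖(1 : ℂ)‖ < 2 * Real.pi := by
    rw [norm_one]
    linarith [Real.pi_gt_three]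
  exact ⟨hcoeff, exists_gevrey_bound_of_summable_borel one_ne_zero (hborel 1 hone).summable,
    fun z hz => (hborel z hz).summable, borelExtension ω A c,
    fun z hz => (hborel z hz).tsum_eq.symm, fun _ hz => differentiableAt_borelExtension hA hz,
    tendsto_sub_mul_borelExtension hA⟩

/-- For a cusp form `g` of even weight `ω` for `SL₂(ℤ)` with Fourier
coefficients `A_m` and entire L-function `L_g`, the series `f̃(y) = Σ_{n≥1} c_n yⁿ` with
`c_n = -(Γ(n)/2πi)(2πi)^{-n} L_g(n)` is Gevrey-1, its Borel transform converges on
`‖ζ‖ < 2π`, and it extends to a meromorphic function on ℂ whose only singularities are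
simple poles at `2πim`, `m ≥ 1`, with residue `A_m/(2πi)` (Stokes constant `-A_m`). -/
theorem stmt14 (ω : ℕ) (hω : Even ω)
    (g : ℂ → ℂ) (A : ℕ → ℂ)
    (hghol : DifferentiableOn ℂ g {y : ℂ | 0 < y.im})
    -- modularity for SL₂(ℤ)
    (hmod : ∀ a b c d : ℤ, a * d - b * c = 1 → ∀ y : ℂ, 0 < y.im →
      g (((a : ℂ) * y + b) / ((c : ℂ) * y + d)) = ((c : ℂ) * y + d) ^ ω * g y)
    -- Fourier expansion (vanishing at the cusp)
    (hfour : ∀ y : ℂ, 0 < y.im →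
      g y = ∑' m : ℕ, A (m + 1) * Complex.exp (2 * Real.pi * I * ((m : ℂ) + 1) * y))
    -- Hecke bound on the Fourier coefficients
    (C : ℝ) (hC : 0 < C) (hA : ∀ m : ℕ, 1 ≤ m → ‖A m‖ ≤ C * (m : ℝ) ^ ω)
    -- the entire continuation of L_g (Hecke's theorem)
    (Lg : ℂ → ℂ) (hLent : Differentiable ℂ Lg)
    (hLagree : ∀ s : ℂ, (ω : ℝ) + 1 < s.re →
      Lg s = ∑' m : ℕ, A (m + 1) / ((m : ℂ) + 1) ^ s)
    (c : ℕ → ℂ)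
    (hc : ∀ n : ℕ, 1 ≤ n →
      c n = -(((n - 1).factorial : ℂ) / (2 * Real.pi * I))
        * (2 * Real.pi * I : ℂ) ^ (-(n : ℤ)) * Lg (n : ℂ)) :
    -- c n agrees with the absolutely convergent series when n > ω + 1
    (∀ n : ℕ, (ω : ℝ) + 1 < (n : ℝ) →
      c n = -(((n - 1).factorial : ℂ) / (2 * Real.pi * I))
        * ∑' m : ℕ, A (m + 1) * (2 * Real.pi * I * ((m : ℂ) + 1)) ^ (-(n : ℤ))) ∧
    -- f̃ is Gevrey-1
    (∃ Cst K : ℝ, 0 < Cst ∧ 0 < K ∧ ∀ n : ℕ, 1 ≤ n →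
      ‖c n‖ ≤ Cst * K⁻¹ ^ n * (n.factorial : ℝ)) ∧
    -- the Borel transform Σ_{n≥1} (c_n/Γ(n)) ζ^{n-1} converges on ‖ζ‖ < 2π ...
    (∀ z : ℂ, ‖z‖ < 2 * Real.pi →
      Summable fun k : ℕ => c (k + 1) / (k.factorial : ℂ) * z ^ k) ∧
    -- ... and extends to a meromorphic function whose only singularities are simple
    -- poles at 2πim with residue A_m/(2πi)
    (∃ G : ℂ → ℂ,
      (∀ z : ℂ, ‖z‖ < 2 * Real.pi →
        G z = ∑' k : ℕ, c (k + 1) / (k.factorial : ℂ) * z ^ k) ∧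
      (∀ z : ℂ, (∀ m : ℕ, z ≠ 2 * Real.pi * I * ((m : ℂ) + 1)) →
        DifferentiableAt ℂ G z) ∧
      (∀ m : ℕ, Tendsto
        (fun z : ℂ => (z - 2 * Real.pi * I * ((m : ℂ) + 1)) * G z)
        (𝓝[≠] (2 * Real.pi * I * ((m : ℂ) + 1)))
        (𝓝 (A (m + 1) / (2 * Real.pi * I))))) :=
  stmt14_general ω A C hA Lg hLagree c hc
end
end

section
/- Let L_∞(s) = Σ_{m≥1} R_m m^{−s} be absolutely convergent for Re(s) > 1, let L₀ be a meromorphic function, and suppose L₀(−s) = −(2i·3^s/(π^{2s}·s))·(Γ((s+1)/2)²/Γ(−s/2)²)·L_∞(s) wherever defined. Set η_m := (2π/3)·i·m. Then for every odd integer n > 1, L₀(−n) = −(2i/π)·n!·(n−1)!·(−2πi)^{−n}·Σ_{m≥1} R_m/η_mⁿ, so that the coefficient c_n := L₀(−n)·(2πi)ⁿ/n! equals −(2Γ(n)/(πi))·Σ_{m≥1} R_m/η_mⁿ; and for every even integer n > 1, L₀(−n) = 0 (because Γ(−n/2)^{−2} vanishes there). -/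
/-!
At a positive integer `n` the Dirichlet series is an honest power sum, and the Borel
singularities `η_m = (2π/3)·i·m` factor out of it as `(2πi/3)⁻ⁿ`. For odd `n = 2k + 1`,
Legendre's duplication formula gives `Γ(k + 1) Γ(k + 3/2) = n! 2⁻ⁿ √π` and the reflection
formula gives `(Γ(-n/2) Γ(k + 3/2))² = π²`, so `Γ((n+1)/2)² / Γ(-n/2)² = n!² / (π 4ⁿ)`; what
remains is the identity `(-2πi)(2πi/3) = 4π²/3`. For even `n`, `-n/2` is a pole of `Γ`.
-/

open Complex
open scoped Nat

namespace Complex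

theorem Gamma_neg_nat_sub_half_mul_Gamma_nat_add_three_halves_sq (k : ℕ) :
    (Gamma (-(k + 1 / 2)) * Gamma (k + 3 / 2)) ^ 2 = (Real.pi : ℂ) ^ 2 := by
  set z : ℂ := -(k + 1 / 2)
  have hcos : cos (Real.pi * z) = 0 := by
    rw [show (Real.pi : ℂ) * z = -(k * Real.pi + Real.pi / 2) by ring, cos_neg,
      cos_add_pi_div_two, sin_nat_mul_pi, neg_zero]
  have hsin : sin (Real.pi * z) ^ 2 = 1 := by
    linear_combination sin_sq_add_cos_sq (Real.pi * z) - cos (Real.pi * z) * hcos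
  rw [show (k : ℂ) + 3 / 2 = 1 - z by ring, Gamma_mul_Gamma_one_sub, div_pow, hsin, div_one]

theorem Gamma_nat_add_one_mul_Gamma_nat_add_three_halves (k : ℕ) :
    Gamma (k + 1) * Gamma (k + 3 / 2) = (2 * k + 1)! * ((2 : ℂ) ^ (2 * k + 1))⁻¹ * √Real.pi := by
  have h := Gamma_mul_Gamma_add_half ((k : ℂ) + 1)
  rwa [show (k : ℂ) + 1 + 1 / 2 = k + 3 / 2 by ring,
    show 2 * ((k : ℂ) + 1) = ((2 * k + 1 : ℕ) : ℂ) + 1 by push_cast; ring,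
    Gamma_nat_eq_factorial (2 * k + 1),
    show (1 : ℂ) - (((2 * k + 1 : ℕ) : ℂ) + 1) = -((2 * k + 1 : ℕ) : ℂ) by ring,
    cpow_neg, cpow_natCast] at h

theorem Gamma_sq_div_Gamma_neg_sq_of_odd {n : ℕ} (hn : Odd n) :
    Gamma ((n + 1) / 2) ^ 2 / Gamma (-n / 2) ^ 2 = (n ! : ℂ) ^ 2 / (Real.pi * 4 ^ n) := by
  obtain ⟨k, rfl⟩ := hn
  have hΓ : Gamma (k + 3 / 2) ≠ 0 := Gamma_ne_zero_of_re_pos (by simp; positivity)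
  have hπ : (Real.pi : ℂ) ≠ 0 := ofReal_ne_zero.mpr Real.pi_ne_zero
  have hsqrt : ((√Real.pi : ℝ) : ℂ) ^ 2 = Real.pi := by
    rw [← ofReal_pow, Real.sq_sqrt Real.pi_pos.le]
  rw [show (((2 * k + 1 : ℕ) : ℂ) + 1) / 2 = k + 1 by push_cast; ring,
    show -((2 * k + 1 : ℕ) : ℂ) / 2 = -(k + 1 / 2) by push_cast; ring,
    ← mul_div_mul_right _ _ (pow_ne_zero 2 hΓ), ← mul_pow, ← mul_pow,
    Gamma_nat_add_one_mul_Gamma_nat_add_three_halves,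
    Gamma_neg_nat_sub_half_mul_Gamma_nat_add_three_halves_sq,
    mul_pow, mul_pow, hsqrt, inv_pow, ← pow_mul, pow_mul', show (2 : ℂ) ^ 2 = 4 by norm_num]
  field_simp

-- Mathlib's `Gamma` takes the value `0` at its poles, in accordance with `1 / Γ` being entire.
theorem Gamma_neg_div_two_of_even {n : ℕ} (hn : Even n) : Gamma (-n / 2) = 0 := by
  obtain ⟨k, rfl⟩ := hn
  rw [show -((k + k : ℕ) : ℂ) / 2 = -k by push_cast; ring, Gamma_neg_nat_eq_zero]

end Complex

theorem tsum_div_mul_pow {ι K : Type*} [Semifield K] [TopologicalSpace K]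
    [IsTopologicalSemiring K] [T2Space K] (f a : ι → K) (c : K) (n : ℕ) :
    ∑' i, f i / (c * a i) ^ n = (c ^ n)⁻¹ * ∑' i, f i / a i ^ n := by
  rw [← tsum_mul_left]
  refine tsum_congr fun i => ?_
  rw [mul_pow, div_mul_eq_div_div_swap, div_eq_inv_mul]

namespace SpectralTrace

theorem prefactor_natCast_eq {n : ℕ} (hn : n ≠ 0) :
    -(2 * I * 3 ^ n / ((Real.pi : ℂ) ^ (2 * n) * n)) * ((n ! : ℂ) ^ 2 / (Real.pi * 4 ^ n))
      = -(2 * I / Real.pi) * n ! * (n - 1)! * (-2 * Real.pi * I : ℂ) ^ (-(n : ℤ))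
        * ((2 * Real.pi / 3 * I : ℂ) ^ n)⁻¹ := by
  have hπ : (Real.pi : ℂ) ≠ 0 := ofReal_ne_zero.mpr Real.pi_ne_zero
  have hfact : (n ! : ℂ) = n * (n - 1)! := by
    rw [← Nat.mul_factorial_pred hn]; push_cast; ring
  have hbase : (-2 * Real.pi * I : ℂ) * (2 * Real.pi / 3 * I) = 4 * Real.pi ^ 2 / 3 := by
    linear_combination (-4 * Real.pi ^ 2 / 3 : ℂ) * I_mul_I
  rw [zpow_neg, zpow_natCast, mul_assoc _ _ ((2 * Real.pi / 3 * I : ℂ) ^ n)⁻¹, ← mul_inv,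
    ← mul_pow, hbase, div_pow, mul_pow, hfact, pow_mul]
  field_simp

theorem prefactor_mul_two_pi_I_pow_div_factorial {n : ℕ} (hn : Odd n) (S : ℂ) :
    -(2 * I / Real.pi) * n ! * (n - 1)! * (-2 * Real.pi * I : ℂ) ^ (-(n : ℤ)) * S
        * (2 * Real.pi * I) ^ n / n !
      = -(2 * (n - 1)! / (Real.pi * I)) * S := by
  have hπ : (Real.pi : ℂ) ≠ 0 := ofReal_ne_zero.mpr Real.pi_ne_zero
  have hfact : (n ! : ℂ) ≠ 0 := mod_cast n.factorial_ne_zero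
  have hneg : (-2 * Real.pi * I : ℂ) ^ n = -(2 * Real.pi * I) ^ n := by
    rw [show (-2 * Real.pi * I : ℂ) = -(2 * Real.pi * I) by ring, hn.neg_pow]
  rw [zpow_neg, zpow_natCast, hneg]
  field_simp
  linear_combination ((n - 1)! * S : ℂ) * I_mul_I

end SpectralTrace

theorem stmt19_general (R : ℕ → ℂ)
    (L₀ : ℂ → ℂ)
    (hfe : ∀ s : ℂ, 1 < s.re →
      L₀ (-s) = -(2 * I * (3 : ℂ) ^ s / ((Real.pi : ℂ) ^ (2 * s) * s))
        * (Complex.Gamma ((s + 1) / 2) ^ 2 / Complex.Gamma (-s / 2) ^ 2)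
        * ∑' m : ℕ, R (m + 1) / ((m : ℂ) + 1) ^ s) :
    -- odd n > 1
    (∀ n : ℕ, Odd n → 1 < n →
      L₀ (-(n : ℂ)) = -(2 * I / (Real.pi : ℂ)) * (n.factorial : ℂ)
          * ((n - 1).factorial : ℂ) * (-2 * Real.pi * I : ℂ) ^ (-(n : ℤ))
          * ∑' m : ℕ, R (m + 1) / (2 * Real.pi / 3 * I * ((m : ℂ) + 1)) ^ n ∧
      L₀ (-(n : ℂ)) * (2 * Real.pi * I) ^ n / (n.factorial : ℂ)
        = -(2 * ((n - 1).factorial : ℂ) / (Real.pi * I))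
          * ∑' m : ℕ, R (m + 1) / (2 * Real.pi / 3 * I * ((m : ℂ) + 1)) ^ n) ∧
    -- even n > 1 (here Γ(-n/2)⁻² vanishes)
    (∀ n : ℕ, Even n → 1 < n → L₀ (-(n : ℂ)) = 0) := by
  have hfe_nat (n : ℕ) (hn : 1 < n) :
      L₀ (-n) = -(2 * I * 3 ^ n / ((Real.pi : ℂ) ^ (2 * n) * n))
        * (Gamma ((n + 1) / 2) ^ 2 / Gamma (-n / 2) ^ 2)
        * ∑' m : ℕ, R (m + 1) / ((m : ℂ) + 1) ^ n := by
    have h := hfe n (by simpa using (mod_cast hn : (1 : ℝ) < n))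
    rw [show (2 : ℂ) * n = ((2 * n : ℕ) : ℂ) by push_cast; ring] at h
    simpa only [cpow_natCast] using h
  refine ⟨fun n hodd hn => ?_, fun n heven hn => ?_⟩
  · have hL₀ : L₀ (-n) = -(2 * I / Real.pi) * n ! * (n - 1)! * (-2 * Real.pi * I : ℂ) ^ (-(n : ℤ))
        * ∑' m : ℕ, R (m + 1) / (2 * Real.pi / 3 * I * ((m : ℂ) + 1)) ^ n := by
      rw [hfe_nat n hn, Gamma_sq_div_Gamma_neg_sq_of_odd hodd,
        SpectralTrace.prefactor_natCast_eq (by omega),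
        tsum_div_mul_pow (fun m => R (m + 1)) (fun m : ℕ => (m : ℂ) + 1), mul_assoc]
    exact ⟨hL₀, by rw [hL₀, SpectralTrace.prefactor_mul_two_pi_I_pow_div_factorial hodd]⟩
  · rw [hfe_nat n hn, Gamma_neg_div_two_of_even heven, zero_pow two_ne_zero, div_zero, mul_zero,
      zero_mul]

/-- Given the functional-equation relation
`L₀(-s) = -(2i·3^s/(π^{2s}s)) (Γ((s+1)/2)²/Γ(-s/2)²) L∞(s)` with
`L∞(s) = Σ_{m≥1} R_m m^{-s}` absolutely convergent for `Re(s) > 1`, and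
`η_m = (2π/3)im`: for every odd `n > 1`,
`L₀(-n) = -(2i/π) n! (n-1)! (-2πi)^{-n} Σ_m R_m/η_mⁿ`, so that
`c_n = L₀(-n)(2πi)ⁿ/n! = -(2Γ(n)/(πi)) Σ_m R_m/η_mⁿ`; and for every even `n > 1`,
`L₀(-n) = 0`. -/
theorem stmt19 (R : ℕ → ℂ)
    (hR : ∀ s : ℂ, 1 < s.re → Summable fun m : ℕ => ‖R (m + 1) / ((m : ℂ) + 1) ^ s‖)
    (L₀ : ℂ → ℂ)
    (hfe : ∀ s : ℂ, 1 < s.re →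
      L₀ (-s) = -(2 * I * (3 : ℂ) ^ s / ((Real.pi : ℂ) ^ (2 * s) * s))
        * (Complex.Gamma ((s + 1) / 2) ^ 2 / Complex.Gamma (-s / 2) ^ 2)
        * ∑' m : ℕ, R (m + 1) / ((m : ℂ) + 1) ^ s) :
    -- odd n > 1
    (∀ n : ℕ, Odd n → 1 < n →
      L₀ (-(n : ℂ)) = -(2 * I / (Real.pi : ℂ)) * (n.factorial : ℂ)
          * ((n - 1).factorial : ℂ) * (-2 * Real.pi * I : ℂ) ^ (-(n : ℤ))
          * ∑' m : ℕ, R (m + 1) / (2 * Real.pi / 3 * I * ((m : ℂ) + 1)) ^ n ∧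
      L₀ (-(n : ℂ)) * (2 * Real.pi * I) ^ n / (n.factorial : ℂ)
        = -(2 * ((n - 1).factorial : ℂ) / (Real.pi * I))
          * ∑' m : ℕ, R (m + 1) / (2 * Real.pi / 3 * I * ((m : ℂ) + 1)) ^ n) ∧
    -- even n > 1 (here Γ(-n/2)⁻² vanishes)
    (∀ n : ℕ, Even n → 1 < n → L₀ (-(n : ℂ)) = 0) :=
  stmt19_general R L₀ hfe
end
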